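/- arXiv:0805.3418 — 2 statements merged into one kernel-verified Lean document; each statement's English description precedes it below -/
import Mathlib

section
/- Let τ ∈ (0,1], α > 0 and λ : [−α,α] → ℂ such that there is C₀ > 0 with |λ(u) − 1 + u²/2| ≤ C₀ |u|^{2+τ} for all |u| ≤ α, and such that |λ(u)| ≤ e^{−u²/4} for all |u| ≤ α. Then there exists C > 0 such that for every integer n ≥ 1 and every real t with |t| ≤ α√n one has |λ(t/√n)^n − e^{−t²/2}| ≤ C n^{−τ/2} |t|^{2+τ} e^{−t²/4}. -/
open Real

/-!
Put `u = t/√n`. Both `λ(u)` and `e^{-u²/2}` have modulus at most `e^{-u²/4}`, so telescoping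
`aⁿ - bⁿ` gives `|λ(u)ⁿ - e^{-t²/2}| ≤ n e^{-(n-1)u²/4} |λ(u) - e^{-u²/2}|`. Both `λ(u)` and
`e^{-u²/2}` equal `1 - u²/2` up to `O(|u|^{2+τ})` on `|u| ≤ α`, and
`n |u|^{2+τ} = n^{-τ/2} |t|^{2+τ}`, while `e^{-(n-1)u²/4} ≤ e^{α²/4} e^{-t²/4}`.
-/

theorem norm_pow_sub_pow_le {R : Type*} [SeminormedRing R] [NormOneClass R] {a b : R} {M : ℝ}
    (ha : ‖a‖ ≤ M) (hb : ‖b‖ ≤ M) (n : ℕ) :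
    ‖a ^ n - b ^ n‖ ≤ n * M ^ (n - 1) * ‖a - b‖ := by
  induction n with
  | zero => simp
  | succ m ih =>
    have hM : 0 ≤ M := (norm_nonneg a).trans ha
    have hbm : ‖b ^ m‖ ≤ M ^ m :=
      (norm_pow_le b m).trans (pow_le_pow_left₀ (norm_nonneg b) hb m)
    have htel : a ^ (m + 1) - b ^ (m + 1) = a * (a ^ m - b ^ m) + (a - b) * b ^ m := by
      simp only [pow_succ']; noncomm_ring
    calc ‖a ^ (m + 1) - b ^ (m + 1)‖
        ≤ ‖a‖ * ‖a ^ m - b ^ m‖ + ‖a - b‖ * ‖b ^ m‖ := by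
          rw [htel]
          exact (norm_add_le _ _).trans (add_le_add (norm_mul_le _ _) (norm_mul_le _ _))
      _ ≤ M * (m * M ^ (m - 1) * ‖a - b‖) + ‖a - b‖ * M ^ m := by gcongr
      _ = (m + 1 : ℕ) * M ^ (m + 1 - 1) * ‖a - b‖ := by
          rcases m with _ | k
          · simp
          · push_cast; ring

namespace Real

theorem abs_exp_sub_one_sub_id_le_of_nonpos {x : ℝ} (hx : x ≤ 0) :
    |exp x - 1 - x| ≤ x ^ 2 := by
  have hlow := add_one_le_exp x
  have hinv : exp x * exp (-x) = 1 := by rw [← exp_add, add_neg_cancel, exp_zero]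
  have hup : exp x ≤ 1 + x + x ^ 2 := by
    nlinarith [add_one_le_exp (-x), exp_pos x]
  rw [abs_le]; constructor <;> nlinarith

end Real

theorem pow_four_le_rpow_mul_rpow {u α τ : ℝ} (hτ : τ ≤ 2) (hu : |u| ≤ α) :
    u ^ 4 ≤ α ^ (2 - τ) * |u| ^ (2 + τ) := by
  have hsplit : u ^ 4 = |u| ^ (2 - τ) * |u| ^ (2 + τ) := by
    rw [← rpow_add' (abs_nonneg u) (by norm_num), show 2 - τ + (2 + τ) = ((4 : ℕ) : ℝ) by
      push_cast; ring, rpow_natCast, pow_abs, abs_of_nonneg (by positivity)]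
  rw [hsplit]
  gcongr

theorem norm_sub_exp_neg_sq_div_two_le {z : ℂ} {u α τ C₀ : ℝ} (hτ : τ ≤ 2)
    (hu : |u| ≤ α) (hz : ‖z - 1 + u ^ 2 / 2‖ ≤ C₀ * |u| ^ (2 + τ)) :
    ‖z - exp (-u ^ 2 / 2)‖ ≤ (C₀ + α ^ (2 - τ) / 4) * |u| ^ (2 + τ) := by
  have hexp : ‖(exp (-u ^ 2 / 2) : ℂ) - 1 + u ^ 2 / 2‖ ≤ u ^ 4 / 4 := by
    have hcast : (exp (-u ^ 2 / 2) : ℂ) - 1 + u ^ 2 / 2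
        = ((exp (-u ^ 2 / 2) - 1 - (-u ^ 2 / 2) : ℝ) : ℂ) := by push_cast; ring
    rw [hcast, Complex.norm_real, norm_eq_abs]
    calc _ ≤ (-u ^ 2 / 2) ^ 2 := abs_exp_sub_one_sub_id_le_of_nonpos (by nlinarith [sq_nonneg u])
      _ = u ^ 4 / 4 := by ring
  calc ‖z - exp (-u ^ 2 / 2)‖
      = ‖(z - 1 + u ^ 2 / 2) - ((exp (-u ^ 2 / 2) : ℂ) - 1 + u ^ 2 / 2)‖ := by ring_nf
    _ ≤ C₀ * |u| ^ (2 + τ) + u ^ 4 / 4 := (norm_sub_le _ _).trans (add_le_add hz hexp)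
    _ ≤ C₀ * |u| ^ (2 + τ) + α ^ (2 - τ) * |u| ^ (2 + τ) / 4 := by
        gcongr; exact pow_four_le_rpow_mul_rpow hτ hu
    _ = (C₀ + α ^ (2 - τ) / 4) * |u| ^ (2 + τ) := by ring

theorem mul_abs_div_sqrt_rpow {x : ℝ} (hx : 0 < x) (t s : ℝ) :
    x * |t / √x| ^ s = x ^ (1 - s / 2) * |t| ^ s := by
  rw [abs_div, abs_of_pos (sqrt_pos.2 hx), div_rpow (abs_nonneg t) (sqrt_nonneg x),
    sqrt_eq_rpow, ← rpow_mul hx.le, rpow_sub hx, rpow_one]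
  ring_nf

theorem exp_neg_div_sqrt_sq_div_pow {n : ℕ} (hn : n ≠ 0) (t c : ℝ) :
    exp (-(t / √n) ^ 2 / c) ^ n = exp (-t ^ 2 / c) := by
  rw [← exp_nat_mul, div_pow, sq_sqrt n.cast_nonneg]
  field_simp

theorem exp_neg_sq_div_four_pow_pred_le {u α : ℝ} (hu : |u| ≤ α) {n : ℕ} (hn : n ≠ 0) :
    exp (-u ^ 2 / 4) ^ (n - 1) ≤ exp (α ^ 2 / 4) * exp (-u ^ 2 / 4) ^ n := by
  have hu2 : u ^ 2 ≤ α ^ 2 := by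
    rw [← sq_abs]; exact pow_le_pow_left₀ (abs_nonneg u) hu 2
  calc exp (-u ^ 2 / 4) ^ (n - 1) = exp (u ^ 2 / 4) * exp (-u ^ 2 / 4) ^ n := by
        rw [← pow_sub_one_mul hn, mul_left_comm, ← exp_add, neg_div,
          add_neg_cancel, exp_zero, mul_one]
    _ ≤ exp (α ^ 2 / 4) * exp (-u ^ 2 / 4) ^ n := by gcongr

theorem stmt_6_general
    (τ : ℝ) (hτ1 : τ ≤ 1)
    (α : ℝ) (hα : 0 < α)
    (lam : ℝ → ℂ)
    (C₀ : ℝ) (hC₀ : 0 < C₀)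
    (hTaylor : ∀ u : ℝ, |u| ≤ α →
      ‖lam u - 1 + u ^ 2 / 2‖ ≤ C₀ * |u| ^ (2 + τ))
    (hmod : ∀ u : ℝ, |u| ≤ α → ‖lam u‖ ≤ Real.exp (-u ^ 2 / 4)) :
    ∃ C > (0 : ℝ), ∀ n : ℕ, 1 ≤ n → ∀ t : ℝ, |t| ≤ α * Real.sqrt n →
      ‖lam (t / Real.sqrt n) ^ n - Real.exp (-t ^ 2 / 2)‖
        ≤ C * (n : ℝ) ^ (-(τ / 2)) * |t| ^ (2 + τ) * Real.exp (-t ^ 2 / 4) := by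
  refine ⟨(C₀ + α ^ (2 - τ) / 4) * exp (α ^ 2 / 4), by positivity, fun n hn t ht => ?_⟩
  have hn0 : n ≠ 0 := by omega
  have hsqrt : 0 < √(n : ℝ) := sqrt_pos.2 (by exact_mod_cast hn)
  set u := t / √(n : ℝ)
  have hu : |u| ≤ α := by
    rw [abs_div, abs_of_pos hsqrt]; exact div_le_of_le_mul₀ hsqrt.le hα.le ht
  have hgauss : ‖(exp (-u ^ 2 / 2) : ℂ)‖ ≤ exp (-u ^ 2 / 4) := by
    rw [Complex.norm_real, norm_of_nonneg (exp_pos _).le, exp_le_exp]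
    nlinarith [sq_nonneg u]
  calc ‖lam u ^ n - exp (-t ^ 2 / 2)‖
      = ‖lam u ^ n - (exp (-u ^ 2 / 2) : ℂ) ^ n‖ := by
        rw [← Complex.ofReal_pow, exp_neg_div_sqrt_sq_div_pow hn0]
    _ ≤ n * exp (-u ^ 2 / 4) ^ (n - 1) * ‖lam u - exp (-u ^ 2 / 2)‖ :=
        norm_pow_sub_pow_le (hmod u hu) hgauss n
    _ ≤ n * (exp (α ^ 2 / 4) * exp (-t ^ 2 / 4))
          * ((C₀ + α ^ (2 - τ) / 4) * |u| ^ (2 + τ)) := by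
        gcongr
        · rw [← exp_neg_div_sqrt_sq_div_pow hn0 t 4]
          exact exp_neg_sq_div_four_pow_pred_le hu hn0
        · exact norm_sub_exp_neg_sq_div_two_le (by linarith) hu (hTaylor u hu)
    _ = (C₀ + α ^ (2 - τ) / 4) * exp (α ^ 2 / 4) * (n * |u| ^ (2 + τ))
          * exp (-t ^ 2 / 4) := by ring
    _ = _ := by
        rw [mul_abs_div_sqrt_rpow (by exact_mod_cast hn),
          show 1 - (2 + τ) / 2 = -(τ / 2) by ring]
        ring

/-- The pointwise estimate of Section 4.3 of the paper:
`|λ(t/√n)^n − e^{−t²/2}| ≤ C n^{−τ/2} |t|^{2+τ} e^{−t²/4}` for `|t| ≤ α√n`. -/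
theorem stmt_6
    (τ : ℝ) (hτ : 0 < τ) (hτ1 : τ ≤ 1)
    (α : ℝ) (hα : 0 < α)
    (lam : ℝ → ℂ)
    (C₀ : ℝ) (hC₀ : 0 < C₀)
    (hTaylor : ∀ u : ℝ, |u| ≤ α →
      ‖lam u - 1 + u ^ 2 / 2‖ ≤ C₀ * |u| ^ (2 + τ))
    (hmod : ∀ u : ℝ, |u| ≤ α → ‖lam u‖ ≤ Real.exp (-u ^ 2 / 4)) :
    ∃ C > (0 : ℝ), ∀ n : ℕ, 1 ≤ n → ∀ t : ℝ, |t| ≤ α * Real.sqrt n →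
      ‖lam (t / Real.sqrt n) ^ n - Real.exp (-t ^ 2 / 2)‖
        ≤ C * (n : ℝ) ^ (-(τ / 2)) * |t| ^ (2 + τ) * Real.exp (-t ^ 2 / 4) :=
  stmt_6_general τ hτ1 α hα lam C₀ hC₀ hTaylor hmod
end

section
/- Assume A := ∫_G c(g)^{1/2} δ_λ(g)² dπ(g) < 1 and ∫_G δ_λ(g)² dπ(g) < ∞, let ν be a Q-invariant probability measure with ν(p_λ²) < ∞, and suppose the norms ‖·‖₁ = m₁ + |·|₁ and ‖·‖_ν := m₁ + ν(|·|) are equivalent on L₁. Then there exist t₀ > 0, κ < 1 and C' ≥ 0 such that for every t with |t| ≤ t₀, every integer n ≥ 1 and every f ∈ L₁: m₁(Q(t)^n f) + ν(|Q(t)^n f|) ≤ κ^n (m₁(f) + ν(|f|)) + C' ν(|f|). -/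
/-!
One step of `Q(t)` satisfies three estimates. It does not increase `ν(|·|)`, because `ν` is
`Q`-stationary and `|e^{itξ}| = 1`. It multiplies `|·|₁` by at most `π(δ_λ²)`, because
`p_λ(gx) ≤ δ_λ(g) p_λ(x)`. And since `|e^{iu} - e^{iv}| ≤ 2 |u - v|^{1/2}` and `ξ` is Lipschitz,
`m₁(Q(t)f) ≤ A (m₁(f) + 2 (|t| C)^{1/2} |f|₁)`. The norm equivalence bounds `|f|₁` by
`m₁(f) + ν(|f|)`, so for small `|t|` we get `m₁(Q(t)f) ≤ κ (m₁(f) + ν(|f|))` with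
`κ = (1 + A)/2 < 1`, and iterating gives the claim with `C' = 1/(1 - κ)`.
-/

open MeasureTheory ENNReal

open Complex in
lemma norm_exp_I_mul_sub_exp_I_mul_le (u v : ℝ) :
    ‖exp (I * u) - exp (I * v)‖ ≤ 2 * √|u - v| := by
  have hfactor : exp (I * u) - exp (I * v) = exp (I * v) * (exp (I * ↑(u - v)) - 1) := by
    rw [mul_sub, ← exp_add]; push_cast; ring_nf
  have hsmall : ‖exp (I * ↑(u - v)) - 1‖ ≤ |u - v| := Real.norm_exp_I_mul_ofReal_sub_one_le
  have hlarge : ‖exp (I * ↑(u - v)) - 1‖ ≤ 2 :=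
    (norm_sub_le _ _).trans (by rw [norm_exp_I_mul_ofReal, norm_one]; norm_num)
  rw [hfactor, norm_mul, norm_exp_I_mul_ofReal, one_mul]
  have hsq := Real.sq_sqrt (abs_nonneg (u - v))
  rcases le_total √|u - v| 1 with h | h
  · nlinarith [Real.sqrt_nonneg |u - v|]
  · linarith

open Complex in
lemma norm_exp_I_mul_mul_sub_le (u v : ℝ) (a b : ℂ) :
    ‖exp (I * u) * a - exp (I * v) * b‖ ≤ ‖a - b‖ + 2 * √|u - v| * min ‖a‖ ‖b‖ := by
  have key : ∀ (u v : ℝ) (a b : ℂ),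
      ‖exp (I * u) * a - exp (I * v) * b‖ ≤ ‖a - b‖ + 2 * √|u - v| * ‖a‖ := fun u v a b =>
    calc ‖exp (I * u) * a - exp (I * v) * b‖
        = ‖exp (I * v) * (a - b) + (exp (I * u) - exp (I * v)) * a‖ := by ring_nf
      _ ≤ ‖a - b‖ + ‖exp (I * u) - exp (I * v)‖ * ‖a‖ := by
        grw [norm_add_le, norm_mul, norm_mul, norm_exp_I_mul_ofReal, one_mul]
      _ ≤ ‖a - b‖ + 2 * √|u - v| * ‖a‖ := by grw [norm_exp_I_mul_sub_exp_I_mul_le]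
  rcases min_choice ‖a‖ ‖b‖ with h | h <;> rw [h]
  · exact key u v a b
  · rw [norm_sub_rev, norm_sub_rev a, abs_sub_comm]
    exact key v u b a

lemma sqrt_add_le_sqrt_add_sqrt {a b : ℝ} (ha : 0 ≤ a) (hb : 0 ≤ b) : √(a + b) ≤ √a + √b :=
  Real.sqrt_le_iff.2 ⟨by positivity, by
    nlinarith [Real.sq_sqrt ha, Real.sq_sqrt hb, Real.sqrt_nonneg a, Real.sqrt_nonneg b]⟩

lemma norm_le_toReal_mul_of_div_le {F : Type*} [SeminormedAddCommGroup F] {z : F} {D : ℝ}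
    {m : ℝ≥0∞} (hD : 0 ≤ D) (hm : m ≠ ⊤) (h : (‖z‖₊ : ℝ≥0∞) / ENNReal.ofReal D ≤ m) :
    ‖z‖ ≤ m.toReal * D := by
  rw [ENNReal.div_le_iff_le_mul (.inr hm) (.inl ofReal_ne_top)] at h
  simpa [ENNReal.toReal_mul, hD] using ENNReal.toReal_mono (mul_ne_top hm ofReal_ne_top) h

lemma div_le_ofReal_of_norm_le {F : Type*} [SeminormedAddCommGroup F] {z : F} {D K : ℝ}
    (hK : 0 ≤ K) (h : ‖z‖ ≤ K * D) : (‖z‖₊ : ℝ≥0∞) / ENNReal.ofReal D ≤ ENNReal.ofReal K := by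
  refine ENNReal.div_le_of_le_mul ?_
  rw [← ENNReal.ofReal_mul hK, ← enorm_eq_nnnorm, ← ofReal_norm]
  exact ENNReal.ofReal_le_ofReal h

section WeightedNorms

variable {E : Type*}

/-- For `p = p_λ`, `weightedSupNorm p` and `weightedHolderSeminorm p` are the paper's `|·|₁`
and `m₁`. -/
noncomputable def weightedSupNorm (p : E → ℝ) (f : E → ℂ) : ℝ≥0∞ :=
  ⨆ x : E, (‖f x‖₊ : ℝ≥0∞) / ENNReal.ofReal (p x ^ 2)

noncomputable def weightedHolderSeminorm [PseudoMetricSpace E] (p : E → ℝ) (f : E → ℂ) :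
    ℝ≥0∞ :=
  ⨆ (x : E) (y : E), (‖f x - f y‖₊ : ℝ≥0∞) / ENNReal.ofReal (√(dist x y) * p x * p y)

variable {p : E → ℝ} {f : E → ℂ}

lemma norm_le_weightedSupNorm (hf : weightedSupNorm p f ≠ ⊤) (x : E) :
    ‖f x‖ ≤ (weightedSupNorm p f).toReal * p x ^ 2 :=
  norm_le_toReal_mul_of_div_le (sq_nonneg _) hf <|
    le_iSup (f := fun x => (‖f x‖₊ : ℝ≥0∞) / ENNReal.ofReal (p x ^ 2)) x

lemma weightedSupNorm_le_ofReal {K : ℝ} (hK : 0 ≤ K) (h : ∀ x, ‖f x‖ ≤ K * p x ^ 2) :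
    weightedSupNorm p f ≤ ENNReal.ofReal K :=
  iSup_le fun x => div_le_ofReal_of_norm_le hK (h x)

variable [PseudoMetricSpace E]

lemma norm_sub_le_weightedHolderSeminorm (hp : ∀ x, 0 ≤ p x)
    (hf : weightedHolderSeminorm p f ≠ ⊤) (x y : E) :
    ‖f x - f y‖ ≤ (weightedHolderSeminorm p f).toReal * (√(dist x y) * p x * p y) :=
  norm_le_toReal_mul_of_div_le (by have := hp x; have := hp y; positivity) hf <|
    le_iSup₂ (f := fun x y => (‖f x - f y‖₊ : ℝ≥0∞) / ENNReal.ofReal (√(dist x y) * p x * p y))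
      x y

lemma weightedHolderSeminorm_le_ofReal {K : ℝ} (hK : 0 ≤ K)
    (h : ∀ x y, ‖f x - f y‖ ≤ K * (√(dist x y) * p x * p y)) :
    weightedHolderSeminorm p f ≤ ENNReal.ofReal K :=
  iSup₂_le fun x y => div_le_ofReal_of_norm_le hK (h x y)

lemma continuous_of_weightedHolderSeminorm_ne_top (hp0 : ∀ x, 0 ≤ p x) (hp : Continuous p)
    (hf : weightedHolderSeminorm p f ≠ ⊤) : Continuous f := by
  refine continuous_iff_continuousAt.2 fun x => tendsto_iff_norm_sub_tendsto_zero.2 ?_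
  set M := (weightedHolderSeminorm p f).toReal
  have hlim : Filter.Tendsto (fun y => M * (√(dist y x) * p y * p x)) (nhds x) (nhds 0) := by
    have : Continuous fun y => M * (√(dist y x) * p y * p x) := by fun_prop
    simpa using this.tendsto x
  exact squeeze_zero (fun _ => norm_nonneg _)
    (fun y => norm_sub_le_weightedHolderSeminorm hp0 hf y x) hlim

end WeightedNorms

lemma one_add_mul_sqrt_dist_map_le {E : Type*} [PseudoMetricSpace E] {φ : E → E} {L lam : ℝ}
    (hφ : ∀ x y, dist (φ x) (φ y) ≤ L * dist x y) (hlam : 0 ≤ lam) (x₀ x : E) :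
    1 + lam * √(dist (φ x) x₀)
      ≤ (√(max L 1) + lam * √(dist (φ x₀) x₀)) * (1 + lam * √(dist x x₀)) := by
  have hsqrt : √(dist (φ x) x₀) ≤ √L * √(dist x x₀) + √(dist (φ x₀) x₀) :=
    calc √(dist (φ x) x₀) ≤ √(dist (φ x) (φ x₀) + dist (φ x₀) x₀) :=
          Real.sqrt_le_sqrt (dist_triangle _ _ _)
      _ ≤ √(dist (φ x) (φ x₀)) + √(dist (φ x₀) x₀) :=
          sqrt_add_le_sqrt_add_sqrt dist_nonneg dist_nonneg
      _ ≤ √L * √(dist x x₀) + √(dist (φ x₀) x₀) := by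
          grw [hφ, Real.sqrt_mul' _ dist_nonneg]
  have hL : √L ≤ √(max L 1) := Real.sqrt_le_sqrt (le_max_left _ _)
  have h1 : 1 ≤ √(max L 1) := Real.one_le_sqrt.2 (le_max_right _ _)
  have := mul_le_mul_of_nonneg_left hsqrt hlam
  have := mul_nonneg (mul_nonneg hlam hlam)
    (mul_nonneg (Real.sqrt_nonneg (dist (φ x₀) x₀)) (Real.sqrt_nonneg (dist x x₀)))
  nlinarith [mul_le_mul_of_nonneg_left hL (mul_nonneg hlam (Real.sqrt_nonneg (dist x x₀))),
    Real.sqrt_nonneg (dist x x₀)]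

section ComposedBounds

variable {E : Type*} {p : E → ℝ} {φ : E → E} {a : ℝ} {f : E → ℂ}

lemma norm_comp_le (hp : ∀ x, 0 ≤ p x) (hφ : ∀ x, p (φ x) ≤ a * p x) {S : ℝ} (hS : 0 ≤ S)
    (hf : ∀ x, ‖f x‖ ≤ S * p x ^ 2) (x : E) : ‖f (φ x)‖ ≤ S * a ^ 2 * p x ^ 2 :=
  calc ‖f (φ x)‖ ≤ S * p (φ x) ^ 2 := hf _
    _ ≤ S * (a * p x) ^ 2 := by gcongr; exacts [hp _, hφ x]
    _ = S * a ^ 2 * p x ^ 2 := by ring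

lemma min_norm_comp_le (hp : ∀ x, 0 ≤ p x) (hφ : ∀ x, p (φ x) ≤ a * p x) {S : ℝ} (hS : 0 ≤ S)
    (hf : ∀ x, ‖f x‖ ≤ S * p x ^ 2) (x y : E) :
    min ‖f (φ x)‖ ‖f (φ y)‖ ≤ S * a ^ 2 * (p x * p y) := by
  have hSa : 0 ≤ S * a ^ 2 := by positivity
  rcases le_total (p x) (p y) with h | h
  · calc min ‖f (φ x)‖ ‖f (φ y)‖ ≤ ‖f (φ x)‖ := min_le_left _ _
      _ ≤ S * a ^ 2 * p x ^ 2 := norm_comp_le hp hφ hS hf x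
      _ ≤ S * a ^ 2 * (p x * p y) := by rw [sq (p x)]; gcongr; exact hp x
  · calc min ‖f (φ x)‖ ‖f (φ y)‖ ≤ ‖f (φ y)‖ := min_le_right _ _
      _ ≤ S * a ^ 2 * p y ^ 2 := norm_comp_le hp hφ hS hf y
      _ ≤ S * a ^ 2 * (p x * p y) := by rw [sq (p y), mul_comm (p x)]; gcongr; exact hp y

variable [PseudoMetricSpace E] {L : ℝ}

lemma norm_comp_sub_comp_le (hp : ∀ x, 0 ≤ p x) (hφ : ∀ x, p (φ x) ≤ a * p x)
    (hφL : ∀ x y, dist (φ x) (φ y) ≤ L * dist x y) {M : ℝ} (hM : 0 ≤ M)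
    (hf : ∀ x y, ‖f x - f y‖ ≤ M * (√(dist x y) * p x * p y)) (x y : E) :
    ‖f (φ x) - f (φ y)‖ ≤ M * (√L * a ^ 2) * (√(dist x y) * p x * p y) :=
  calc ‖f (φ x) - f (φ y)‖ ≤ M * (√(dist (φ x) (φ y)) * p (φ x) * p (φ y)) := hf _ _
    _ ≤ M * (√L * √(dist x y) * (a * p x) * (a * p y)) := by
        have hsqrt : √(dist (φ x) (φ y)) ≤ √L * √(dist x y) := by
          rw [← Real.sqrt_mul' _ dist_nonneg]; exact Real.sqrt_le_sqrt (hφL x y)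
        gcongr
        · exact hp _
        · exact mul_nonneg (by positivity) ((hp _).trans (hφ x))
        · exact hp _
        · exact hφ x
        · exact hφ y
    _ = M * (√L * a ^ 2) * (√(dist x y) * p x * p y) := by ring

open Complex in
lemma norm_exp_I_mul_mul (t s : ℝ) : ‖exp (I * t * s)‖ = 1 := by
  rw [mul_assoc, ← Complex.ofReal_mul, norm_exp_I_mul_ofReal]

open Complex in
lemma norm_exp_mul_comp_sub_le {ξ : E → ℝ} {K : NNReal} (hξ : LipschitzWith K ξ) (t : ℝ)
    (hp : ∀ x, 0 ≤ p x) (hφ : ∀ x, p (φ x) ≤ a * p x)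
    (hφL : ∀ x y, dist (φ x) (φ y) ≤ L * dist x y) {M S : ℝ} (hM : 0 ≤ M) (hS : 0 ≤ S)
    (hfM : ∀ x y, ‖f x - f y‖ ≤ M * (√(dist x y) * p x * p y))
    (hfS : ∀ x, ‖f x‖ ≤ S * p x ^ 2) (x y : E) :
    ‖exp (I * t * ξ (φ x)) * f (φ x) - exp (I * t * ξ (φ y)) * f (φ y)‖
      ≤ (M + 2 * √(|t| * K) * S) * (√L * a ^ 2) * (√(dist x y) * p x * p y) := by
  have hphase : 2 * √|t * ξ (φ x) - t * ξ (φ y)| ≤ 2 * √(|t| * K) * (√L * √(dist x y)) := by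
    have hdiff : |t * ξ (φ x) - t * ξ (φ y)| ≤ |t| * K * (L * dist x y) := by
      rw [← mul_sub, abs_mul, mul_assoc, ← Real.dist_eq]
      gcongr
      exact (hξ.dist_le_mul _ _).trans (by gcongr; exact hφL x y)
    grw [hdiff, Real.sqrt_mul (by positivity), Real.sqrt_mul' _ dist_nonneg, mul_assoc]
  have hcast : ∀ s : ℝ, I * t * s = I * ↑(t * s) := fun s => by push_cast; ring
  rw [hcast, hcast]
  calc _ ≤ ‖f (φ x) - f (φ y)‖ + 2 * √|t * ξ (φ x) - t * ξ (φ y)| * min ‖f (φ x)‖ ‖f (φ y)‖ :=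
        norm_exp_I_mul_mul_sub_le _ _ _ _
    _ ≤ M * (√L * a ^ 2) * (√(dist x y) * p x * p y)
          + 2 * √(|t| * K) * (√L * √(dist x y)) * (S * a ^ 2 * (p x * p y)) := by
        gcongr
        · exact norm_comp_sub_comp_le hp hφ hφL hM hfM x y
        · exact min_norm_comp_le hp hφ hS hfS x y
    _ = (M + 2 * √(|t| * K) * S) * (√L * a ^ 2) * (√(dist x y) * p x * p y) := by ring

end ComposedBounds

section FourierOperator

variable {E G : Type*} [MeasurableSpace G]

noncomputable def fourierOperator (act : G → E → E) (π : Measure G) (ξ : E → ℝ) (t : ℝ)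
    (f : E → ℂ) (x : E) : ℂ :=
  ∫ g, Complex.exp (Complex.I * t * ξ (act g x)) * f (act g x) ∂π

variable {act : G → E → E} {π : Measure G} {ξ : E → ℝ} {p : E → ℝ} {δ : G → ℝ} {f : E → ℂ}

lemma norm_fourierOperator_le (hp : ∀ x, 0 ≤ p x) (hpδ : ∀ g x, p (act g x) ≤ δ g * p x)
    (hδ : Integrable (fun g => δ g ^ 2) π) {S : ℝ} (hS : 0 ≤ S) (hf : ∀ x, ‖f x‖ ≤ S * p x ^ 2)
    (t : ℝ) (x : E) :
    ‖fourierOperator act π ξ t f x‖ ≤ S * (∫ g, δ g ^ 2 ∂π) * p x ^ 2 := by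
  refine (norm_integral_le_of_norm_le ((hδ.const_mul S).mul_const (p x ^ 2))
    (ae_of_all _ fun g => ?_)).trans_eq (by rw [integral_mul_const, integral_const_mul])
  rw [norm_mul, norm_exp_I_mul_mul, one_mul]
  exact norm_comp_le hp (hpδ g) hS hf x

lemma weightedSupNorm_fourierOperator_le (hp : ∀ x, 0 ≤ p x)
    (hpδ : ∀ g x, p (act g x) ≤ δ g * p x) (hδ : Integrable (fun g => δ g ^ 2) π)
    (hf : weightedSupNorm p f ≠ ⊤) (t : ℝ) :
    weightedSupNorm p (fourierOperator act π ξ t f)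
      ≤ ENNReal.ofReal (∫ g, δ g ^ 2 ∂π) * weightedSupNorm p f := by
  have hB : 0 ≤ ∫ g, δ g ^ 2 ∂π := integral_nonneg fun g => sq_nonneg _
  refine (weightedSupNorm_le_ofReal (by positivity) (norm_fourierOperator_le hp hpδ hδ
    toReal_nonneg (norm_le_weightedSupNorm hf) t)).trans_eq ?_
  rw [ENNReal.ofReal_mul toReal_nonneg, ofReal_toReal hf, mul_comm]

variable [MeasurableSpace E]

lemma integrable_fourierOperator_integrand (hact : Measurable fun q : G × E => act q.1 q.2)
    (hξ : Measurable ξ) (hfm : Measurable f) (hp : ∀ x, 0 ≤ p x)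
    (hpδ : ∀ g x, p (act g x) ≤ δ g * p x) (hδ : Integrable (fun g => δ g ^ 2) π) {S : ℝ}
    (hS : 0 ≤ S) (hf : ∀ x, ‖f x‖ ≤ S * p x ^ 2) (t : ℝ) (x : E) :
    Integrable (fun g => Complex.exp (Complex.I * t * ξ (act g x)) * f (act g x)) π := by
  have hactx : Measurable fun g => act g x := hact.comp (measurable_id.prodMk measurable_const)
  refine ((hδ.const_mul S).mul_const (p x ^ 2)).mono' (by fun_prop) (ae_of_all _ fun g => ?_)
  rw [norm_mul, norm_exp_I_mul_mul, one_mul]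
  exact norm_comp_le hp (hpδ g) hS hf x

lemma lintegral_nnnorm_fourierOperator_le [SFinite π] {ν : Measure E}
    (hact : Measurable fun q : G × E => act q.1 q.2)
    (hν : ν.bind (fun x => π.map (fun g => act g x)) = ν) (hfm : Measurable f) (t : ℝ) :
    ∫⁻ x, ‖fourierOperator act π ξ t f x‖₊ ∂ν ≤ ∫⁻ x, ‖f x‖₊ ∂ν := by
  have hactx (x : E) : Measurable fun g => act g x :=
    hact.comp (measurable_id.prodMk measurable_const)
  have hkernel : Measurable fun x => π.map (fun g => act g x) := by
    have : (fun x => π.map (fun g => act g x))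
        = fun x => (π.map fun g => (g, x)).map fun q : G × E => act q.1 q.2 := by
      ext1 x; rw [Measure.map_map hact measurable_prodMk_right]; rfl
    rw [this]
    exact (Measure.measurable_map _ hact).comp Measurable.map_prodMk_right
  have hfm' : Measurable fun y => (‖f y‖₊ : ℝ≥0∞) := hfm.nnnorm.coe_nnreal_ennreal
  calc ∫⁻ x, ‖fourierOperator act π ξ t f x‖₊ ∂ν
      ≤ ∫⁻ x, ∫⁻ g, ‖f (act g x)‖₊ ∂π ∂ν := by
        refine lintegral_mono fun x =>
          (enorm_integral_le_lintegral_enorm _).trans_eq (lintegral_congr fun g => ?_)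
        rw [enorm_mul, ← ofReal_norm, norm_exp_I_mul_mul, ENNReal.ofReal_one, one_mul]
        rfl
    _ = ∫⁻ x, ‖f x‖₊ ∂ν := by
        simp_rw [← lintegral_map hfm' (hactx _)]
        rw [← Measure.lintegral_bind hkernel.aemeasurable hfm'.aemeasurable, hν]

variable [PseudoMetricSpace E] [OpensMeasurableSpace E] {c : G → ℝ} {K : NNReal}

lemma norm_fourierOperator_sub_le (hact : Measurable fun q : G × E => act q.1 q.2)
    (hξ : LipschitzWith K ξ) (hfm : Measurable f) (hp : ∀ x, 0 ≤ p x)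
    (hpδ : ∀ g x, p (act g x) ≤ δ g * p x) (hc : ∀ g x y, dist (act g x) (act g y) ≤ c g * dist x y)
    (hA : Integrable (fun g => √(c g) * δ g ^ 2) π) (hδ : Integrable (fun g => δ g ^ 2) π)
    {M S : ℝ} (hM : 0 ≤ M) (hS : 0 ≤ S) (hfM : ∀ x y, ‖f x - f y‖ ≤ M * (√(dist x y) * p x * p y))
    (hfS : ∀ x, ‖f x‖ ≤ S * p x ^ 2) (t : ℝ) (x y : E) :
    ‖fourierOperator act π ξ t f x - fourierOperator act π ξ t f y‖
      ≤ (M + 2 * √(|t| * K) * S) * (∫ g, √(c g) * δ g ^ 2 ∂π) * (√(dist x y) * p x * p y) := by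
  have hint := integrable_fourierOperator_integrand hact hξ.continuous.measurable hfm hp hpδ hδ
    hS hfS t
  rw [fourierOperator, fourierOperator, ← integral_sub (hint x) (hint y)]
  refine (norm_integral_le_of_norm_le ((hA.const_mul _).mul_const _)
    (ae_of_all _ fun g => ?_)).trans_eq (by rw [integral_mul_const, integral_const_mul])
  exact norm_exp_mul_comp_sub_le hξ t hp (hpδ g) (hc g) hM hS hfM hfS x y

lemma weightedHolderSeminorm_fourierOperator_le (hact : Measurable fun q : G × E => act q.1 q.2)
    (hξ : LipschitzWith K ξ) (hfm : Measurable f) (hp : ∀ x, 0 ≤ p x)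
    (hpδ : ∀ g x, p (act g x) ≤ δ g * p x) (hc : ∀ g x y, dist (act g x) (act g y) ≤ c g * dist x y)
    (hA : Integrable (fun g => √(c g) * δ g ^ 2) π) (hδ : Integrable (fun g => δ g ^ 2) π)
    (hfM : weightedHolderSeminorm p f ≠ ⊤) (hfS : weightedSupNorm p f ≠ ⊤) (t : ℝ) :
    weightedHolderSeminorm p (fourierOperator act π ξ t f)
      ≤ ENNReal.ofReal (∫ g, √(c g) * δ g ^ 2 ∂π)
        * (weightedHolderSeminorm p f + ENNReal.ofReal (2 * √(|t| * K)) * weightedSupNorm p f) := by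
  have hA0 : 0 ≤ ∫ g, √(c g) * δ g ^ 2 ∂π := integral_nonneg fun g => by positivity
  refine (weightedHolderSeminorm_le_ofReal (by positivity) (norm_fourierOperator_sub_le hact hξ
    hfm hp hpδ hc hA hδ toReal_nonneg toReal_nonneg (norm_sub_le_weightedHolderSeminorm hp hfM)
    (norm_le_weightedSupNorm hfS) t)).trans_eq ?_
  rw [ENNReal.ofReal_mul (by positivity), ENNReal.ofReal_add toReal_nonneg (by positivity),
    ENNReal.ofReal_mul (by positivity), ofReal_toReal hfM, ofReal_toReal hfS, mul_comm]

end FourierOperator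

lemma ofReal_mul_inv_one_sub_add_one {κ : ℝ} (hκ0 : 0 ≤ κ) (hκ1 : κ < 1) :
    ENNReal.ofReal κ * ENNReal.ofReal (1 - κ)⁻¹ + 1 = ENNReal.ofReal (1 - κ)⁻¹ := by
  have h : 0 < 1 - κ := sub_pos.2 hκ1
  rw [← ENNReal.ofReal_mul hκ0, ← ENNReal.ofReal_one,
    ← ENNReal.ofReal_add (by positivity) zero_le_one]
  congr 1
  field_simp
  ring

lemma iterate_doeblinFortet {X : Type*} {T : X → X} {P : X → Prop} {m ν : X → ℝ≥0∞}
    {κ C : ℝ≥0∞} (hC : κ * C + 1 ≤ C) (hP : ∀ f, P f → P (T f))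
    (hν : ∀ f, P f → ν (T f) ≤ ν f) (hm : ∀ f, P f → m (T f) ≤ κ * (m f + ν f)) {f : X}
    (hf : P f) (n : ℕ) :
    m (T^[n] f) + ν (T^[n] f) ≤ κ ^ n * (m f + ν f) + C * ν f := by
  have hPn (n : ℕ) : P (T^[n] f) := Function.Iterate.rec P hf hP n
  have hνn (n : ℕ) : ν (T^[n] f) ≤ ν f := by
    induction n with
    | zero => rfl
    | succ n ih => rw [Function.iterate_succ_apply']; exact (hν _ (hPn n)).trans ih
  induction n with
  | zero => simp
  | succ n ih =>
    rw [Function.iterate_succ_apply']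
    calc m (T (T^[n] f)) + ν (T (T^[n] f)) ≤ κ * (m (T^[n] f) + ν (T^[n] f)) + ν f :=
          add_le_add (hm _ (hPn n)) ((hν _ (hPn n)).trans (hνn n))
      _ ≤ κ * (κ ^ n * (m f + ν f) + C * ν f) + ν f := by gcongr
      _ = κ ^ (n + 1) * (m f + ν f) + (κ * C + 1) * ν f := by ring
      _ ≤ κ ^ (n + 1) * (m f + ν f) + C * ν f := by gcongr

lemma ofReal_mul_add_le_of_equiv {m s ν : ℝ≥0∞} {A c₁ ε : ℝ} (hA0 : 0 ≤ A) (hA1 : A ≤ 1)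
    (hε : ε ≤ c₁ * (1 - A) / 2) (hequiv : ENNReal.ofReal c₁ * (m + s) ≤ m + ν) :
    ENNReal.ofReal A * (m + ENNReal.ofReal ε * s) ≤ ENNReal.ofReal ((1 + A) / 2) * (m + ν) := by
  have hA1' : 0 ≤ (1 - A) / 2 := by linarith
  have hs : ENNReal.ofReal ε * s ≤ ENNReal.ofReal ((1 - A) / 2) * (m + ν) :=
    calc ENNReal.ofReal ε * s ≤ ENNReal.ofReal ((1 - A) / 2) * (ENNReal.ofReal c₁ * s) := by
          rw [← mul_assoc, ← ENNReal.ofReal_mul hA1']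
          gcongr
          linarith
      _ ≤ ENNReal.ofReal ((1 - A) / 2) * (m + ν) := by
          grw [← hequiv, ← le_add_self]
  calc ENNReal.ofReal A * (m + ENNReal.ofReal ε * s)
      ≤ ENNReal.ofReal A * ((1 + ENNReal.ofReal ((1 - A) / 2)) * (m + ν)) := by
        gcongr
        calc m + ENNReal.ofReal ε * s ≤ (m + ν) + ENNReal.ofReal ((1 - A) / 2) * (m + ν) :=
              add_le_add le_self_add hs
          _ = (1 + ENNReal.ofReal ((1 - A) / 2)) * (m + ν) := by ring
    _ = ENNReal.ofReal (A * (1 + (1 - A) / 2)) * (m + ν) := by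
        rw [ENNReal.ofReal_mul hA0, ENNReal.ofReal_add zero_le_one hA1', ENNReal.ofReal_one,
          mul_assoc]
    _ ≤ ENNReal.ofReal ((1 + A) / 2) * (m + ν) := by
        gcongr
        nlinarith

lemma exists_pos_forall_abs_le_two_mul_sqrt_le (K : NNReal) {ε : ℝ} (hε : 0 < ε) :
    ∃ t₀ > (0 : ℝ), ∀ t, |t| ≤ t₀ → 2 * √(|t| * K) ≤ ε := by
  refine ⟨(ε / 2) ^ 2 / (K + 1), by positivity, fun t ht => ?_⟩
  have hK : |t| * K ≤ (ε / 2) ^ 2 :=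
    calc |t| * K ≤ (ε / 2) ^ 2 / (K + 1) * (K + 1) := by gcongr; linarith
      _ = (ε / 2) ^ 2 := div_mul_cancel₀ _ (by positivity)
  calc 2 * √(|t| * K) ≤ 2 * √((ε / 2) ^ 2) := by gcongr
    _ = ε := by rw [Real.sqrt_sq (by positivity)]; ring

theorem stmt_12_general
    {E : Type*} [MetricSpace E] [MeasurableSpace E] [BorelSpace E]
    (x₀ : E)
    -- the Lipschitz transformations of `E`
    {G : Type*} [MeasurableSpace G]
    (act : G → E → E) (hact : Measurable fun p : G × E => act p.1 p.2)
    (c : G → ℝ)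
    (hcLip : ∀ g x y, dist (act g x) (act g y) ≤ c g * dist x y)
    (π : Measure G) [IsProbabilityMeasure π]
    -- the Lipschitz function `ξ` and the Fourier kernels `Q(t)`
    (ξ : E → ℝ) (C : ℝ) (hξLip : ∀ x y, |ξ x - ξ y| ≤ C * dist x y)
    (Qt : ℝ → (E → ℂ) → E → ℂ)
    (hQt : ∀ t f x, Qt t f x = ∫ g, Complex.exp (Complex.I * t * ξ (act g x)) * f (act g x) ∂π)
    -- the weights `p_λ` and `δ_λ`
    (lam : ℝ) (hlam0 : 0 < lam)
    (pl : E → ℝ) (hpl : ∀ x, pl x = 1 + lam * Real.sqrt (dist x x₀))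
    (δ : G → ℝ) (hδ : ∀ g, δ g = Real.sqrt (max (c g) 1) + lam * Real.sqrt (dist (act g x₀) x₀))
    -- the seminorms `m₁`, `|·|₁` and `ν(|·|)`
    (ν : Measure E)
    (hinv : ν.bind (fun x => π.map (fun g => act g x)) = ν)
    (m1 : (E → ℂ) → ℝ≥0∞)
    (hm1 : ∀ f, m1 f = ⨆ (x : E) (y : E),
      (‖f x - f y‖₊ : ℝ≥0∞) / ENNReal.ofReal (Real.sqrt (dist x y) * pl x * pl y))
    (i1 : (E → ℂ) → ℝ≥0∞)
    (hi1 : ∀ f, i1 f = ⨆ x : E, (‖f x‖₊ : ℝ≥0∞) / ENNReal.ofReal (pl x ^ 2))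
    (νn : (E → ℂ) → ℝ≥0∞) (hνn : ∀ f, νn f = ∫⁻ x, ‖f x‖₊ ∂ν)
    -- the hypotheses: `A < 1`, `B < ∞`, equivalence of `‖·‖₁` and `‖·‖_ν` on `L₁`
    (hAint : Integrable (fun g => Real.sqrt (c g) * δ g ^ 2) π)
    (hA1 : (∫ g, Real.sqrt (c g) * δ g ^ 2 ∂π) < 1)
    (hBint : Integrable (fun g => δ g ^ 2) π)
    (hequiv : ∃ c₁ c₂ : ℝ, 0 < c₁ ∧ 0 < c₂ ∧ ∀ f : E → ℂ,
      m1 f ≠ ⊤ → i1 f ≠ ⊤ →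
      ENNReal.ofReal c₁ * (m1 f + i1 f) ≤ m1 f + νn f ∧
      m1 f + νn f ≤ ENNReal.ofReal c₂ * (m1 f + i1 f)) :
    ∃ t₀ > (0 : ℝ), ∃ κ : ℝ, 0 ≤ κ ∧ κ < 1 ∧ ∃ C' : ℝ, 0 ≤ C' ∧
      ∀ t : ℝ, |t| ≤ t₀ → ∀ n : ℕ, 1 ≤ n → ∀ f : E → ℂ,
        m1 f ≠ ⊤ → i1 f ≠ ⊤ →
        m1 ((Qt t)^[n] f) + νn ((Qt t)^[n] f)
          ≤ ENNReal.ofReal κ ^ n * (m1 f + νn f) + ENNReal.ofReal C' * νn f := by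
  obtain ⟨c₁, _, hc₁, -, hequiv⟩ := hequiv
  have hQ : Qt = fourierOperator act π ξ := funext fun t => funext fun f => funext (hQt t f)
  have hm : m1 = weightedHolderSeminorm pl := funext hm1
  have hi : i1 = weightedSupNorm pl := funext hi1
  subst hQ hm hi
  have hξ : LipschitzWith (Real.toNNReal C) ξ := .of_dist_le' hξLip
  have hpl0 (x : E) : 0 ≤ pl x := by rw [hpl]; positivity
  have hplc : Continuous pl := by rw [funext hpl]; fun_prop
  have hplδ (g : G) (x : E) : pl (act g x) ≤ δ g * pl x := by
    rw [hpl, hpl, hδ]; exact one_add_mul_sqrt_dist_map_le (hcLip g) hlam0.le x₀ x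
  set A := ∫ g, √(c g) * δ g ^ 2 ∂π
  have hA0 : 0 ≤ A := integral_nonneg fun g => by positivity
  obtain ⟨t₀, ht₀, hε⟩ := exists_pos_forall_abs_le_two_mul_sqrt_le (Real.toNNReal C)
    (show 0 < c₁ * (1 - A) / 2 by nlinarith)
  have hκ1 : (1 + A) / 2 < 1 := by linarith
  refine ⟨t₀, ht₀, (1 + A) / 2, by positivity, hκ1, (1 - (1 + A) / 2)⁻¹,
    inv_nonneg.2 (by linarith), fun t ht n _ f hfm hfi => ?_⟩
  set P : (E → ℂ) → Prop := fun f => weightedHolderSeminorm pl f ≠ ⊤ ∧ weightedSupNorm pl f ≠ ⊤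
  have hmeas {f : E → ℂ} (hf : P f) : Measurable f :=
    (continuous_of_weightedHolderSeminorm_ne_top hpl0 hplc hf.1).measurable
  have hholder {f : E → ℂ} (hf : P f) :=
    weightedHolderSeminorm_fourierOperator_le hact hξ (hmeas hf) hpl0 hplδ hcLip hAint hBint
      hf.1 hf.2 t
  have hsup {f : E → ℂ} (hf : P f) :=
    weightedSupNorm_fourierOperator_le (ξ := ξ) hpl0 hplδ hBint hf.2 t
  refine iterate_doeblinFortet (P := P) (ofReal_mul_inv_one_sub_add_one (by positivity) hκ1).le
    (fun f hf => ⟨?_, ?_⟩) (fun f hf => ?_) (fun f hf => ?_) ⟨hfm, hfi⟩ n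
  · exact ne_top_of_le_ne_top
      (mul_ne_top ofReal_ne_top (add_ne_top.2 ⟨hf.1, mul_ne_top ofReal_ne_top hf.2⟩)) (hholder hf)
  · exact ne_top_of_le_ne_top (mul_ne_top ofReal_ne_top hf.2) (hsup hf)
  · rw [hνn, hνn]
    exact lintegral_nnnorm_fourierOperator_le hact hinv (hmeas hf) t
  · exact (hholder hf).trans
      (ofReal_mul_add_le_of_equiv hA0 hA1.le (hε t ht) (hequiv f hf.1 hf.2).1)

/-- Lemma 3.2 of the paper (second part): the uniform Doeblin–Fortet inequality (H4),
`m₁(Q(t)ⁿf) + ν(|Q(t)ⁿf|) ≤ κⁿ (m₁(f) + ν(|f|)) + C' ν(|f|)` for `|t| ≤ t₀`. -/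
theorem stmt_12
    {E : Type*} [MetricSpace E] [MeasurableSpace E] [BorelSpace E]
    (hballs : ∀ (x : E) (r : ℝ), IsCompact (Metric.closedBall x r))
    (x₀ : E)
    -- the Lipschitz transformations of `E`
    {G : Type*} [MeasurableSpace G]
    (act : G → E → E) (hact : Measurable fun p : G × E => act p.1 p.2)
    (c : G → ℝ) (hc0 : ∀ g, 0 ≤ c g)
    (hcLip : ∀ g x y, dist (act g x) (act g y) ≤ c g * dist x y)
    (hcLeast : ∀ g r, 0 ≤ r → (∀ x y, dist (act g x) (act g y) ≤ r * dist x y) → c g ≤ r)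
    (π : Measure G) [IsProbabilityMeasure π]
    -- the Lipschitz function `ξ` and the Fourier kernels `Q(t)`
    (ξ : E → ℝ) (C : ℝ) (hC : 0 ≤ C) (hξLip : ∀ x y, |ξ x - ξ y| ≤ C * dist x y)
    (Qt : ℝ → (E → ℂ) → E → ℂ)
    (hQt : ∀ t f x, Qt t f x = ∫ g, Complex.exp (Complex.I * t * ξ (act g x)) * f (act g x) ∂π)
    -- the weights `p_λ` and `δ_λ`
    (lam : ℝ) (hlam0 : 0 < lam) (hlam1 : lam ≤ 1)
    (pl : E → ℝ) (hpl : ∀ x, pl x = 1 + lam * Real.sqrt (dist x x₀))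
    (δ : G → ℝ) (hδ : ∀ g, δ g = Real.sqrt (max (c g) 1) + lam * Real.sqrt (dist (act g x₀) x₀))
    -- the seminorms `m₁`, `|·|₁` and `ν(|·|)`
    (ν : Measure E) [IsProbabilityMeasure ν]
    (hinv : ν.bind (fun x => π.map (fun g => act g x)) = ν)
    (hνpl : Integrable (fun x => pl x ^ 2) ν)
    (m1 : (E → ℂ) → ℝ≥0∞)
    (hm1 : ∀ f, m1 f = ⨆ (x : E) (y : E),
      (‖f x - f y‖₊ : ℝ≥0∞) / ENNReal.ofReal (Real.sqrt (dist x y) * pl x * pl y))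
    (i1 : (E → ℂ) → ℝ≥0∞)
    (hi1 : ∀ f, i1 f = ⨆ x : E, (‖f x‖₊ : ℝ≥0∞) / ENNReal.ofReal (pl x ^ 2))
    (νn : (E → ℂ) → ℝ≥0∞) (hνn : ∀ f, νn f = ∫⁻ x, ‖f x‖₊ ∂ν)
    -- the hypotheses: `A < 1`, `B < ∞`, equivalence of `‖·‖₁` and `‖·‖_ν` on `L₁`
    (hAint : Integrable (fun g => Real.sqrt (c g) * δ g ^ 2) π)
    (hA1 : (∫ g, Real.sqrt (c g) * δ g ^ 2 ∂π) < 1)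
    (hBint : Integrable (fun g => δ g ^ 2) π)
    (hequiv : ∃ c₁ c₂ : ℝ, 0 < c₁ ∧ 0 < c₂ ∧ ∀ f : E → ℂ,
      m1 f ≠ ⊤ → i1 f ≠ ⊤ →
      ENNReal.ofReal c₁ * (m1 f + i1 f) ≤ m1 f + νn f ∧
      m1 f + νn f ≤ ENNReal.ofReal c₂ * (m1 f + i1 f)) :
    ∃ t₀ > (0 : ℝ), ∃ κ : ℝ, 0 ≤ κ ∧ κ < 1 ∧ ∃ C' : ℝ, 0 ≤ C' ∧
      ∀ t : ℝ, |t| ≤ t₀ → ∀ n : ℕ, 1 ≤ n → ∀ f : E → ℂ,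
        m1 f ≠ ⊤ → i1 f ≠ ⊤ →
        m1 ((Qt t)^[n] f) + νn ((Qt t)^[n] f)
          ≤ ENNReal.ofReal κ ^ n * (m1 f + νn f) + ENNReal.ofReal C' * νn f :=
  stmt_12_general x₀ act hact c hcLip π ξ C hξLip Qt hQt lam hlam0 pl hpl δ hδ ν hinv m1 hm1 i1 hi1
    νn hνn hAint hA1 hBint hequiv
end
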